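/- arXiv:1602.03499 — 2 statements merged into one kernel-verified Lean document; each statement's English description precedes it below -/
import Mathlib

section
/- Let d ≥ 3 and let A and B be finite subsets of ℤ^d. Then cap(A ∪ B) ≥ cap(A) + cap(B) − 2 ∑_{x ∈ A} ∑_{y ∈ B} G(x,y). -/
/-!
Write `e_C(x) = P_x(T_C^+ = ∞)`. A walk from `x` that avoids `A` but returns to `A ∪ B` visits
`B`, so `e_A(x) ≤ e_{A ∪ B}(x) + ∑_{y ∈ B} G(x,y)`; likewise for `x ∈ B \ A`, while on `A ∩ B`
one uses `e ≤ 1 ≤ G(x,x)`. Summing and using the symmetry of `G` gives the bound.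

This needs `G < ∞`. If the walk from the origin escapes with probability zero, every capacity
vanishes. Otherwise a last-exit decomposition bounds `∑_t P_0(S_t = 0)` by the inverse of the
escape probability, and irreducibility carries this over to every `G(x,y)`. All probabilities are
computed by counting, since under `P0` the base-`2d` digits of `u` are i.i.d. uniform.
-/

open MeasureTheory ProbabilityTheory Filter

noncomputable section

/-- The uniform probability measure on `[0,1)`: the driving randomness for the walk. -/
def P0 : Measure ℝ := volume.restrict (Set.Ico (0:ℝ) 1)

/-- `i`-th digit of `u` in base `b`.  For `u ∈ [0,1)` these digits are i.i.d. uniform on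
`{0, …, b-1}` under `P0`. -/
def digit (b i : ℕ) (u : ℝ) : ℕ := (⌊u * (b : ℝ) ^ (i + 1)⌋).toNat % b

/-- Enumeration of the `2d` unit vectors of `ℤ^d`: `stepVec d j = e_j` for `j < d` and
`stepVec d j = -e_{j-d}` for `d ≤ j < 2d`. -/
def stepVec (d j : ℕ) : Fin d → ℤ :=
  fun i => if j < d then (if (i : ℕ) = j then 1 else 0)
    else (if (i : ℕ) = j - d then -1 else 0)

/-- Simple random walk on `ℤ^d` started at `x`, at time `n`, driven by the base-`2d`
digits of `u` (which are i.i.d. uniform on the `2d` unit steps under `P0`). -/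
def walk (d : ℕ) (x : Fin d → ℤ) (u : ℝ) (n : ℕ) : Fin d → ℤ :=
  x + ∑ i ∈ Finset.range n, stepVec d (digit (2 * d) i u)

/-- Probability that the walk started at `x` never returns to `A` after time `0`,
i.e. `P_x(T_A^+ = ∞)`. -/
def escProb (d : ℕ) (A : Set (Fin d → ℤ)) (x : Fin d → ℤ) : ℝ :=
  (P0 {u | ∀ t, 1 ≤ t → walk d x u t ∉ A}).toReal

/-- Capacity of a finite subset of `ℤ^d`. -/
def capa (d : ℕ) (A : Finset (Fin d → ℤ)) : ℝ :=
  ∑ x ∈ A, escProb d (↑A) x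

/-- Green kernel of the simple random walk on `ℤ^d`:
`G(x,y) = E_x[∑_{t≥0} 1(S_t = y)] = ∑_{t≥0} P_x(S_t = y)`. -/
def green (d : ℕ) (x y : Fin d → ℤ) : ℝ :=
  (∑' t : ℕ, P0 {u | walk d x u t = y}).toReal

/-- Range `R[m,n] = {S_m, …, S_n}` of the walk started at `x`, driven by `u`. -/
def walkRange (d : ℕ) (x : Fin d → ℤ) (u : ℝ) (m n : ℕ) : Finset (Fin d → ℤ) :=
  (Finset.Icc m n).image (walk d x u)

open Finset
open scoped ENNReal

lemma P0_apply (S : Set ℝ) : P0 S = volume (S ∩ Set.Ico 0 1) :=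
  Measure.restrict_apply' measurableSet_Ico

instance : IsProbabilityMeasure P0 :=
  ⟨by rw [P0, Measure.restrict_apply_univ, Real.volume_Ico]; norm_num⟩

section Digits

variable {b T : ℕ}

def digitSeq (b : ℕ) (u : ℝ) : ℕ → ℕ := fun i => digit b i u

def DependsOnFirst (T : ℕ) (φ : (ℕ → ℕ) → Prop) : Prop :=
  ∀ f g : ℕ → ℕ, (∀ i < T, f i = g i) → (φ f ↔ φ g)

def extendByZero (a : Fin T → Fin b) : ℕ → ℕ :=
  fun i => if h : i < T then a ⟨i, h⟩ else 0

lemma measurable_digit (b i : ℕ) : Measurable (digit b i) :=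
  (measurable_of_countable fun z : ℤ => z.toNat % b).comp
    (Int.measurable_floor.comp (measurable_id.mul_const _))

lemma measurableSet_of_dependsOnFirst {φ : (ℕ → ℕ) → Prop} (hφ : DependsOnFirst T φ) :
    MeasurableSet {u | φ (digitSeq b u)} := by
  have hmeas : Measurable fun u (i : Fin T) => digit b i u :=
    measurable_pi_lambda _ fun i => measurable_digit b i
  convert hmeas (Set.to_countable
    {c : Fin T → ℕ | φ fun i => if h : i < T then c ⟨i, h⟩ else 0}).measurableSet using 1
  ext u
  exact hφ _ _ fun i hi => by simp [digitSeq, hi]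

/-- The base-`b` digits of `m < b ^ T`, written with `T` places, most significant first. -/
def prefixEquiv (b T : ℕ) : Fin (b ^ T) ≃ (Fin T → Fin b) :=
  finFunctionFinEquiv.symm.trans (Equiv.arrowCongr Fin.revPerm (Equiv.refl _))

lemma prefixEquiv_apply_val (m : Fin (b ^ T)) (i : Fin T) :
    (prefixEquiv b T m i : ℕ) = m / b ^ (T - 1 - i) % b := by
  simp [prefixEquiv, Fin.revPerm_symm, finFunctionFinEquiv_symm_apply_val, Fin.val_rev,
    Nat.sub_sub, add_comm]

/-- The points of `[0, ∞)` whose first `T` digits in base `b` spell `m`. -/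
def digitCell (b T m : ℕ) : Set ℝ := {u | 0 ≤ u ∧ ⌊u * (b : ℝ) ^ T⌋₊ = m}

lemma digitCell_eq_Ico (hb : 0 < b) (m : ℕ) :
    digitCell b T m = Set.Ico (m / (b : ℝ) ^ T) ((m + 1) / (b : ℝ) ^ T) := by
  have hbT : (0 : ℝ) < (b : ℝ) ^ T := by positivity
  ext u
  simp only [digitCell, Set.mem_ofPred_eq, Set.mem_Ico, div_le_iff₀ hbT, lt_div_iff₀ hbT]
  constructor
  · rintro ⟨hu, rfl⟩
    exact ⟨Nat.floor_le (by positivity), Nat.lt_floor_add_one _⟩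
  · rintro ⟨h₁, h₂⟩
    have hu : 0 ≤ u := nonneg_of_mul_nonneg_left (le_trans (by positivity) h₁) hbT
    exact ⟨hu, (Nat.floor_eq_iff (by positivity)).2 ⟨h₁, h₂⟩⟩

lemma volume_digitCell (hb : 0 < b) (m : ℕ) : volume (digitCell b T m) = ((b : ℝ≥0∞) ^ T)⁻¹ := by
  rw [digitCell_eq_Ico hb, Real.volume_Ico, ← sub_div, add_sub_cancel_left, one_div,
    ENNReal.ofReal_inv_of_pos (by positivity), ENNReal.ofReal_pow (Nat.cast_nonneg b),
    ENNReal.ofReal_natCast]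

lemma floor_mul_pow_lt (hb : 0 < b) {u : ℝ} (hu : u ∈ Set.Ico (0 : ℝ) 1) :
    ⌊u * (b : ℝ) ^ T⌋₊ < b ^ T := by
  rw [Nat.floor_lt (mul_nonneg hu.1 (by positivity)), Nat.cast_pow]
  exact mul_lt_of_lt_one_left (by positivity) hu.2

lemma mem_Ico_of_mem_digitCell (hb : 0 < b) {m : ℕ} (hm : m < b ^ T) {u : ℝ}
    (hu : u ∈ digitCell b T m) : u ∈ Set.Ico (0 : ℝ) 1 := by
  rw [digitCell_eq_Ico hb] at hu
  refine ⟨le_trans (by positivity) hu.1, hu.2.trans_le ?_⟩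
  rw [div_le_one (by positivity)]
  exact_mod_cast hm

lemma digit_eq_of_mem_digitCell (hb : 0 < b) {m : ℕ} {u : ℝ} (hu : u ∈ digitCell b T m) {i : ℕ}
    (hi : i < T) : digit b i u = m / b ^ (T - 1 - i) % b := by
  have hexp : (i + 1) + (T - 1 - i) = T := by omega
  have hpow : u * (b : ℝ) ^ (i + 1) = u * (b : ℝ) ^ T / ((b ^ (T - 1 - i) : ℕ) : ℝ) := by
    rw [eq_div_iff (by positivity), Nat.cast_pow, mul_assoc, ← pow_add, hexp]
  rw [digit, Int.floor_toNat, hpow, Nat.floor_div_natCast, hu.2]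

lemma P0_eq_card_mul (hb : 0 < b) {φ : (ℕ → ℕ) → Prop} (hφ : DependsOnFirst T φ) :
    P0 {u | φ (digitSeq b u)} =
      Nat.card {a : Fin T → Fin b // φ (extendByZero a)} * ((b : ℝ≥0∞) ^ T)⁻¹ := by
  classical
  rw [Nat.card_eq_fintype_card, Fintype.card_subtype]
  have hcell : ∀ m : Fin (b ^ T), ∀ u ∈ digitCell b T m,
      ∀ i < T, digitSeq b u i = extendByZero (prefixEquiv b T m) i := fun m u hu i hi => by
    simp [digitSeq, extendByZero, hi, prefixEquiv_apply_val, digit_eq_of_mem_digitCell hb hu hi]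
  have hunion : {u | φ (digitSeq b u)} ∩ Set.Ico 0 1 =
      ⋃ a ∈ ({a | φ (extendByZero a)} : Finset (Fin T → Fin b)),
        digitCell b T ((prefixEquiv b T).symm a) := by
    ext u
    simp only [Set.mem_inter_iff, Set.mem_ofPred_eq, Set.mem_iUnion, mem_filter, mem_univ,
      true_and, exists_prop]
    constructor
    · rintro ⟨hφu, hu⟩
      set m : Fin (b ^ T) := ⟨_, floor_mul_pow_lt hb hu⟩
      have hmem : u ∈ digitCell b T m := ⟨hu.1, rfl⟩
      exact ⟨prefixEquiv b T m, (hφ _ _ (hcell m u hmem)).1 hφu, by simpa using hmem⟩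
    · rintro ⟨a, hφa, hu⟩
      have := hcell _ u hu
      rw [Equiv.apply_symm_apply] at this
      exact ⟨(hφ _ _ this).2 hφa, mem_Ico_of_mem_digitCell hb (Fin.isLt _) hu⟩
  have hdisj : Set.PairwiseDisjoint (↑({a | φ (extendByZero a)} : Finset (Fin T → Fin b)))
      fun a => digitCell b T ((prefixEquiv b T).symm a) := by
    intro a _ a' _ hne
    refine Set.disjoint_left.2 fun u hu hu' => hne ?_
    simpa using Fin.ext (hu.2.symm.trans hu'.2)
  rw [P0_apply, hunion, measure_biUnion_finset hdisj fun a _ => ?_]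
  · simp [volume_digitCell hb]
  · rw [digitCell_eq_Ico hb]; exact measurableSet_Ico

lemma P0_ne_zero_of_mem (hb : 0 < b) {φ : (ℕ → ℕ) → Prop} (hφ : DependsOnFirst T φ)
    (a : Fin T → Fin b) (ha : φ (extendByZero a)) : P0 {u | φ (digitSeq b u)} ≠ 0 := by
  have : Nonempty {a : Fin T → Fin b // φ (extendByZero a)} := ⟨⟨a, ha⟩⟩
  rw [P0_eq_card_mul hb hφ]
  refine mul_ne_zero ?_ (ENNReal.inv_ne_zero.2 (ENNReal.pow_ne_top (ENNReal.natCast_ne_top b)))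
  exact_mod_cast Nat.card_pos.ne'

lemma DependsOnFirst.and_shift {s r : ℕ} {φ ψ : (ℕ → ℕ) → Prop} (hφ : DependsOnFirst s φ)
    (hψ : DependsOnFirst r ψ) : DependsOnFirst (s + r) fun f => φ f ∧ ψ fun i => f (s + i) :=
  fun f g h => and_congr (hφ f g fun i hi => h i (by omega))
    (hψ _ _ fun i hi => h (s + i) (by omega))

lemma card_and_shift {s r : ℕ} {φ ψ : (ℕ → ℕ) → Prop} (hφ : DependsOnFirst s φ)
    (hψ : DependsOnFirst r ψ) :
    Nat.card {c : Fin (s + r) → Fin b // φ (extendByZero c) ∧ ψ fun i => extendByZero c (s + i)} =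
      Nat.card {p : Fin s → Fin b // φ (extendByZero p)} *
        Nat.card {q : Fin r → Fin b // ψ (extendByZero q)} := by
  rw [← Nat.card_prod, ← Nat.card_congr Equiv.subtypeProdEquivProd]
  refine (Nat.card_congr (Equiv.subtypeEquiv (Fin.appendEquiv s r) fun ⟨p, q⟩ => ?_)).symm
  refine and_congr (hφ _ _ fun i hi => ?_) (hψ _ _ fun i hi => ?_)
  · simp [extendByZero, hi, show i < s + r by omega, Fin.append_left p q ⟨i, hi⟩ |>.symm]
  · simp [extendByZero, hi, Fin.append_right p q ⟨i, hi⟩ |>.symm]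

lemma P0_and_shift (hb : 0 < b) {s r : ℕ} {φ ψ : (ℕ → ℕ) → Prop} (hφ : DependsOnFirst s φ)
    (hψ : DependsOnFirst r ψ) :
    P0 {u | φ (digitSeq b u) ∧ ψ fun i => digitSeq b u (s + i)} =
      P0 {u | φ (digitSeq b u)} * P0 {u | ψ (digitSeq b u)} := by
  rw [P0_eq_card_mul hb (hφ.and_shift hψ), P0_eq_card_mul hb hφ, P0_eq_card_mul hb hψ,
    card_and_shift hφ hψ, pow_add, ENNReal.mul_inv (by simp) (by simp)]
  push_cast
  ring

end Digits

section Walk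

variable {d : ℕ}

def stepSum (d t : ℕ) (f : ℕ → ℕ) : Fin d → ℤ := ∑ i ∈ range t, stepVec d (f i)

lemma walk_eq_add_stepSum (x : Fin d → ℤ) (u : ℝ) (t : ℕ) :
    walk d x u t = x + stepSum d t (digitSeq (2 * d) u) := rfl

lemma stepSum_add (s r : ℕ) (f : ℕ → ℕ) :
    stepSum d (s + r) f = stepSum d s f + stepSum d r fun i => f (s + i) :=
  sum_range_add _ _ _

lemma stepSum_congr {t : ℕ} {f g : ℕ → ℕ} (h : ∀ i < t, f i = g i) :
    stepSum d t f = stepSum d t g :=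
  sum_congr rfl fun i hi => by rw [h i (mem_range.1 hi)]

lemma dependsOnFirst_stepSum_eq (t : ℕ) (v : Fin d → ℤ) :
    DependsOnFirst t fun f => stepSum d t f = v := fun _ _ h => by
  dsimp only
  rw [stepSum_congr h]

/-- `p_t(v) = P₀(S_t = v)`. -/
def transProb (d t : ℕ) (v : Fin d → ℤ) : ℝ≥0∞ :=
  P0 {u | stepSum d t (digitSeq (2 * d) u) = v}

lemma P0_walk_eq (x y : Fin d → ℤ) (t : ℕ) :
    P0 {u | walk d x u t = y} = transProb d t (y - x) := by
  simp only [transProb, walk_eq_add_stepSum, eq_sub_iff_add_eq']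

lemma transProb_zero_zero : transProb d 0 0 = 1 := by
  simp [transProb, stepSum]

lemma transProb_mul_le (hd : 0 < d) (s r : ℕ) (v w : Fin d → ℤ) :
    transProb d s v * transProb d r w ≤ transProb d (s + r) (v + w) := by
  rw [transProb, transProb, ← P0_and_shift (by omega) (dependsOnFirst_stepSum_eq s v)
    (dependsOnFirst_stepSum_eq r w)]
  refine measure_mono fun u ⟨hv, hw⟩ => ?_
  simp only [Set.mem_ofPred_eq, stepSum_add, hv, hw]

def flipStep (d : ℕ) : Equiv.Perm (Fin (2 * d)) :=
  Function.Involutive.toPerm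
    (fun j => ⟨if (j : ℕ) < d then j + d else j - d, by split_ifs <;> omega⟩)
    (fun j => by ext; dsimp only; split_ifs <;> omega)

lemma flipStep_apply_val (j : Fin (2 * d)) :
    (flipStep d j : ℕ) = if (j : ℕ) < d then j + d else j - d := rfl

lemma stepVec_flipStep (j : Fin (2 * d)) : stepVec d (flipStep d j) = -stepVec d j := by
  funext i
  simp only [flipStep_apply_val, stepVec, Pi.neg_apply]
  split_ifs <;> omega

lemma stepSum_extendByZero_flipStep {t : ℕ} (a : Fin t → Fin (2 * d)) :
    stepSum d t (extendByZero (flipStep d ∘ a)) = -stepSum d t (extendByZero a) := by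
  rw [stepSum, stepSum, ← sum_neg_distrib]
  refine sum_congr rfl fun i hi => ?_
  simp [extendByZero, mem_range.1 hi, stepVec_flipStep]

lemma transProb_neg (hd : 0 < d) (t : ℕ) (v : Fin d → ℤ) :
    transProb d t (-v) = transProb d t v := by
  rw [transProb, transProb, P0_eq_card_mul (by omega) (dependsOnFirst_stepSum_eq t _),
    P0_eq_card_mul (by omega) (dependsOnFirst_stepSum_eq t _)]
  congr 2
  refine Nat.card_congr (Equiv.subtypeEquiv (Equiv.arrowCongr (Equiv.refl _) (flipStep d)) ?_)
  intro a
  change _ ↔ stepSum d t (extendByZero (flipStep d ∘ a)) = v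
  rw [stepSum_extendByZero_flipStep, neg_eq_iff_eq_neg]

lemma stepVec_of_lt (i : Fin d) : stepVec d i = Pi.single i 1 := by
  funext k
  simp [stepVec, Pi.single_apply, Fin.ext_iff]

lemma stepVec_add_self (i : Fin d) : stepVec d (i + d) = -Pi.single i 1 := by
  funext k
  simp only [stepVec, Pi.single_apply, Fin.ext_iff, Pi.neg_apply]
  split_ifs <;> simp_all

lemma transProb_one_stepVec_ne_zero (hd : 0 < d) {j : ℕ} (hj : j < 2 * d) :
    transProb d 1 (stepVec d j) ≠ 0 :=
  P0_ne_zero_of_mem (by omega) (dependsOnFirst_stepSum_eq 1 _) (fun _ => ⟨j, hj⟩)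
    (by simp [stepSum, extendByZero])

/-- The sites reached with positive probability form a submonoid containing every `±e_i`. -/
lemma exists_transProb_ne_zero (hd : 0 < d) (v : Fin d → ℤ) : ∃ t, transProb d t v ≠ 0 := by
  let R : AddSubmonoid (Fin d → ℤ) :=
    { carrier := {v | ∃ t, transProb d t v ≠ 0}
      zero_mem' := ⟨0, by simp [transProb_zero_zero]⟩
      add_mem' := fun ⟨s, hs⟩ ⟨r, hr⟩ =>
        ⟨s + r, ne_bot_of_le_ne_bot (mul_ne_zero hs hr) (transProb_mul_le hd _ _ _ _)⟩ }
  have hstep : ∀ j < 2 * d, stepVec d j ∈ R := fun j hj => ⟨1, transProb_one_stepVec_ne_zero hd hj⟩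
  have hsingle : ∀ (i : Fin d) (n : ℤ), Pi.single i n ∈ R := by
    intro i n
    induction n using Int.induction_on with
    | zero => simp [R.zero_mem]
    | succ n ih =>
      rw [Pi.single_add]
      exact R.add_mem ih (stepVec_of_lt i ▸ hstep i (by omega))
    | pred n ih =>
      rw [sub_eq_add_neg, Pi.single_add]
      refine R.add_mem ih ?_
      rw [Pi.single_neg, ← stepVec_add_self]
      exact hstep _ (by omega)
  have hv : ∑ i, Pi.single i (v i) ∈ R := R.sum_mem fun i _ => hsingle i (v i)
  rwa [univ_sum_single] at hv

end Walk

section LastExit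

variable {d : ℕ}

def NoReturnUpTo (d n : ℕ) (f : ℕ → ℕ) : Prop := ∀ r, 1 ≤ r → r ≤ n → stepSum d r f ≠ 0

lemma dependsOnFirst_noReturnUpTo (n : ℕ) : DependsOnFirst n (NoReturnUpTo d n) :=
  fun f g h => forall_congr' fun r => imp_congr_right fun _ => imp_congr_right fun hr =>
    not_congr (dependsOnFirst_stepSum_eq r 0 f g fun i hi => h i (by omega))

def noReturn (d : ℕ) : Set ℝ := {u | ∀ t, 1 ≤ t → stepSum d t (digitSeq (2 * d) u) ≠ 0}

def IsLastZero (d T s : ℕ) (f : ℕ → ℕ) : Prop :=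
  stepSum d s f = 0 ∧ NoReturnUpTo d (T - s) fun i => f (s + i)

lemma IsLastZero.stepSum_ne_zero {T s s' : ℕ} {f : ℕ → ℕ} (h : IsLastZero d T s f)
    (hss' : s < s') (hs'T : s' ≤ T) : stepSum d s' f ≠ 0 := by
  have hsplit := stepSum_add (d := d) s (s' - s) f
  rw [Nat.add_sub_cancel' hss'.le, h.1, zero_add] at hsplit
  rw [hsplit]
  exact h.2 _ (by omega) (by omega)

/-- Last-exit decomposition: the last visits to the origin before `T` are disjoint events, and
after each of them the walk escapes for the remaining time, independently of the past. -/
lemma sum_transProb_zero_mul_le_one (hd : 0 < d) (T : ℕ) :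
    (∑ s ∈ range T, transProb d s 0) * P0 (noReturn d) ≤ 1 := by
  set G : ℕ → Set ℝ := fun s => {u | IsLastZero d T s (digitSeq (2 * d) u)}
  have hG : ∀ s, transProb d s 0 * P0 (noReturn d) ≤ P0 (G s) := fun s => by
    simp only [G, IsLastZero]
    rw [P0_and_shift (by omega) (dependsOnFirst_stepSum_eq s 0) (dependsOnFirst_noReturnUpTo _)]
    refine mul_le_mul_right (measure_mono ?_) _
    exact fun u hu r hr _ => hu r hr
  have hdisj : (range T : Set ℕ).PairwiseDisjoint G := by
    intro s hs s' hs' hne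
    wlog hlt : s < s' generalizing s s'
    · exact (this hs' hs hne.symm (by omega)).symm
    exact Set.disjoint_left.2 fun u hu hu' =>
      hu.stepSum_ne_zero hlt (by simp at hs'; omega) hu'.1
  have hmeas : ∀ s ∈ range T, MeasurableSet (G s) := fun s _ =>
    measurableSet_of_dependsOnFirst
      ((dependsOnFirst_stepSum_eq s 0).and_shift (dependsOnFirst_noReturnUpTo _))
  calc (∑ s ∈ range T, transProb d s 0) * P0 (noReturn d)
      = ∑ s ∈ range T, transProb d s 0 * P0 (noReturn d) := sum_mul _ _ _
    _ ≤ ∑ s ∈ range T, P0 (G s) := sum_le_sum fun s _ => hG s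
    _ = P0 (⋃ s ∈ range T, G s) := (measure_biUnion_finset hdisj hmeas).symm
    _ ≤ 1 := prob_le_one

lemma tsum_transProb_zero_mul_le_one (hd : 0 < d) :
    (∑' t, transProb d t 0) * P0 (noReturn d) ≤ 1 := by
  rw [← ENNReal.tsum_mul_right]
  refine ENNReal.tsum_le_of_sum_range_le fun T => ?_
  rw [← sum_mul]
  exact sum_transProb_zero_mul_le_one hd T

/-- If the walk escapes with positive probability, the expected number of visits to any site is
finite: reaching `0` from `v` costs a fixed positive factor `p_s(-v)`. -/
lemma tsum_transProb_ne_top (hd : 0 < d) (hesc : P0 (noReturn d) ≠ 0) (v : Fin d → ℤ) :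
    ∑' t, transProb d t v ≠ ⊤ := by
  obtain ⟨s, hs⟩ := exists_transProb_ne_zero hd (-v)
  have hzero : ∑' t, transProb d t 0 ≠ ⊤ := fun htop => by
    simpa [htop, ENNReal.top_mul hesc] using tsum_transProb_zero_mul_le_one hd
  have hprod : (∑' t, transProb d t v) * transProb d s (-v) ≠ ⊤ := by
    refine ne_top_of_le_ne_top hzero ?_
    calc (∑' t, transProb d t v) * transProb d s (-v)
        = ∑' t, transProb d t v * transProb d s (-v) := ENNReal.tsum_mul_right.symm
      _ ≤ ∑' t, transProb d (t + s) 0 :=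
          ENNReal.tsum_le_tsum fun t => by simpa using transProb_mul_le hd t s v (-v)
      _ ≤ ∑' t, transProb d t 0 :=
          ENNReal.tsum_comp_le_tsum_of_injective (add_left_injective s) _
  exact fun htop => hprod (by rw [htop, ENNReal.top_mul hs])

end LastExit

section Capacity

variable {d : ℕ}

lemma green_eq_toReal_tsum (x y : Fin d → ℤ) :
    green d x y = (∑' t, transProb d t (y - x)).toReal := by
  simp only [green, P0_walk_eq]

lemma green_comm (hd : 0 < d) (x y : Fin d → ℤ) : green d x y = green d y x := by
  simp only [green_eq_toReal_tsum, ← neg_sub x y, transProb_neg hd]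

lemma green_nonneg (x y : Fin d → ℤ) : 0 ≤ green d x y := ENNReal.toReal_nonneg

lemma capa_nonneg (A : Finset (Fin d → ℤ)) : 0 ≤ capa d A :=
  sum_nonneg fun _ _ => ENNReal.toReal_nonneg

lemma escProb_le_one (S : Set (Fin d → ℤ)) (x : Fin d → ℤ) : escProb d S x ≤ 1 :=
  ENNReal.toReal_le_of_le_ofReal zero_le_one (by simpa using prob_le_one)

lemma escProb_eq_zero_of_mem (hrec : P0 (noReturn d) = 0) {S : Set (Fin d → ℤ)}
    {x : Fin d → ℤ} (hx : x ∈ S) : escProb d S x = 0 := by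
  have hsub : {u | ∀ t, 1 ≤ t → walk d x u t ∉ S} ⊆ noReturn d := fun u hu t ht h0 =>
    hu t ht (by rwa [walk_eq_add_stepSum, h0, add_zero])
  rw [escProb, measure_mono_null hsub hrec, ENNReal.toReal_zero]

lemma capa_eq_zero_of_recurrent (hrec : P0 (noReturn d) = 0) (A : Finset (Fin d → ℤ)) :
    capa d A = 0 :=
  sum_eq_zero fun _ hx => escProb_eq_zero_of_mem hrec (mem_coe.2 hx)

variable (hfin : ∀ v : Fin d → ℤ, ∑' t, transProb d t v ≠ ⊤)
include hfin

lemma one_le_green_self (x : Fin d → ℤ) : 1 ≤ green d x x := by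
  rw [green_eq_toReal_tsum, sub_self]
  have h : (1 : ℝ≥0∞) ≤ ∑' t, transProb d t 0 := transProb_zero_zero.ge.trans (ENNReal.le_tsum 0)
  simpa using ENNReal.toReal_mono (hfin 0) h

/-- A walk that avoids `S` but not `S ∪ D` visits `D`. -/
lemma escProb_le_escProb_union_add (S : Set (Fin d → ℤ)) (D : Finset (Fin d → ℤ))
    (x : Fin d → ℤ) : escProb d S x ≤ escProb d (S ∪ D) x + ∑ y ∈ D, green d x y := by
  have hsub : {u | ∀ t, 1 ≤ t → walk d x u t ∉ S} ⊆
      {u | ∀ t, 1 ≤ t → walk d x u t ∉ S ∪ D} ∪ ⋃ y ∈ D, ⋃ t, {u | walk d x u t = y} := by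
    intro u hu
    by_cases h : ∀ t, 1 ≤ t → walk d x u t ∉ S ∪ D
    · exact Or.inl h
    push Not at h
    obtain ⟨t, ht, hmem⟩ := h
    simp only [Set.mem_union, Set.mem_iUnion]
    exact Or.inr ⟨_, hmem.resolve_left (hu t ht), t, rfl⟩
  have hle : P0 {u | ∀ t, 1 ≤ t → walk d x u t ∉ S} ≤
      P0 {u | ∀ t, 1 ≤ t → walk d x u t ∉ S ∪ D} + ∑ y ∈ D, ∑' t, transProb d t (y - x) :=
    calc _ ≤ _ := measure_mono hsub
      _ ≤ _ := measure_union_le _ _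
      _ ≤ _ := add_le_add_right ((measure_biUnion_finset_le _ _).trans
          (sum_le_sum fun y _ => (measure_iUnion_le _).trans_eq (by simp only [P0_walk_eq]))) _
  have hsum : ∑ y ∈ D, ∑' t, transProb d t (y - x) ≠ ⊤ := ENNReal.sum_ne_top.2 fun y _ => hfin _
  have := ENNReal.toReal_mono (ENNReal.add_ne_top.2 ⟨measure_ne_top _ _, hsum⟩) hle
  rw [ENNReal.toReal_add (measure_ne_top _ _) hsum, ENNReal.toReal_sum fun y _ => hfin _] at this
  simpa only [escProb, green_eq_toReal_tsum] using this

lemma capa_le_sum_escProb_union_add (A B : Finset (Fin d → ℤ)) :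
    capa d A ≤ ∑ x ∈ A, escProb d ↑(A ∪ B) x + ∑ x ∈ A, ∑ y ∈ B, green d x y := by
  rw [capa, ← sum_add_distrib, coe_union]
  exact sum_le_sum fun x _ => escProb_le_escProb_union_add hfin _ B x

/-- On `A ∩ B` the escape probability is bounded by `G(x, x)`, a term of `∑_{y ∈ A} G(x, y)`. -/
lemma capa_le_sum_sdiff_escProb_union_add (A B : Finset (Fin d → ℤ)) :
    capa d B ≤ ∑ x ∈ B \ A, escProb d ↑(A ∪ B) x + ∑ x ∈ B, ∑ y ∈ A, green d x y := by
  rw [capa, ← sum_inter_add_sum_sdiff B A, ← sum_inter_add_sum_sdiff B A fun x => ∑ y ∈ A, _]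
  have hinter : ∑ x ∈ B ∩ A, escProb d B x ≤ ∑ x ∈ B ∩ A, ∑ y ∈ A, green d x y :=
    sum_le_sum fun x hx => ((escProb_le_one _ x).trans (one_le_green_self hfin x)).trans
      (single_le_sum (fun y _ => green_nonneg x y) (mem_inter.1 hx).2)
  have hsdiff : ∑ x ∈ B \ A, escProb d B x ≤
      ∑ x ∈ B \ A, (escProb d ↑(A ∪ B) x + ∑ y ∈ A, green d x y) :=
    sum_le_sum fun x _ => by
      rw [union_comm, coe_union]
      exact escProb_le_escProb_union_add hfin _ A x
  rw [sum_add_distrib] at hsdiff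
  linarith

end Capacity

/-- **Lower bound for the capacity of a union.** For `d ≥ 3` and finite `A, B ⊆ ℤ^d`,
`cap(A ∪ B) ≥ cap(A) + cap(B) − 2 ∑_{x ∈ A} ∑_{y ∈ B} G(x,y)`. -/
theorem capa_union_ge (d : ℕ) (hd : 3 ≤ d) (A B : Finset (Fin d → ℤ)) :
    capa d A + capa d B - 2 * ∑ x ∈ A, ∑ y ∈ B, green d x y ≤ capa d (A ∪ B) := by
  have hd0 : 0 < d := by omega
  have hgreen : 0 ≤ ∑ x ∈ A, ∑ y ∈ B, green d x y :=
    sum_nonneg fun x _ => sum_nonneg fun y _ => green_nonneg x y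
  rcases eq_or_ne (P0 (noReturn d)) 0 with hrec | hesc
  · rw [capa_eq_zero_of_recurrent hrec, capa_eq_zero_of_recurrent hrec]
    linarith [capa_nonneg (A ∪ B)]
  have hfin := tsum_transProb_ne_top hd0 hesc
  have hA := capa_le_sum_escProb_union_add hfin A B
  have hB := capa_le_sum_sdiff_escProb_union_add hfin A B
  have hAB : capa d (A ∪ B) =
      ∑ x ∈ A, escProb d ↑(A ∪ B) x + ∑ x ∈ B \ A, escProb d ↑(A ∪ B) x := by
    rw [capa, ← sum_union disjoint_sdiff, union_sdiff_self_eq_union]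
  have hswap : ∑ x ∈ B, ∑ y ∈ A, green d x y = ∑ x ∈ A, ∑ y ∈ B, green d x y := by
    rw [sum_comm]
    exact sum_congr rfl fun y _ => sum_congr rfl fun x _ => green_comm hd0 x y
  linarith
end
end

section
/- Let (a_n), (b_n), (c_n) be sequences of real numbers such that a_n + a_m − c_{n+m} ≤ a_{n+m} ≤ a_n + a_m + b_{n+m} for all n, m ≥ 1. If (b_n) and (c_n) are nonnegative, non-decreasing, and satisfy ∑_{n=1}^∞ (b_n + c_n)/(n(n+1)) < ∞, then the limit lim_{n→∞} a_n/n exists. -/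
/-!
Put `g = b + c` and `φ n = ∑_{k ≥ n} g k / (k (k + 1))`, so that `φ n → 0` and, `g` being
non-decreasing, `g m ≤ 4 m (φ m - φ (2 m))`. Both `a` and `-a` are subadditive up to the error `g`.
For such an `h`, splitting `m = q n + r` (`r ≤ q`) into two halves `s ≥ t` of the same shape and
inducting on `q` gives `h m ≤ (q - r) h n + r h (n + 1) + 16 m (φ n - φ (2 m))`: the split being
balanced, the error `g m` is paid for by the drop of `φ` between `2 t` and `2 m`. Hence
`limsup h m / m ≤ h n / n + 16 φ n` for every `n`, and for `h = ±a` this makes `a n / n` Cauchy.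
-/

open Filter Topology Finset

def SubadditiveUpTo (g h : ℕ → ℝ) : Prop :=
  ∀ x, 1 ≤ x → ∀ y, 1 ≤ y → h (x + y) ≤ h x + h y + g (x + y)

noncomputable def tailSum (G : ℕ → ℝ) (n : ℕ) : ℝ := ∑' k, G (k + n)

section TailSum

variable {G : ℕ → ℝ}

theorem tailSum_sub_tailSum (hG : Summable G) (n k : ℕ) :
    tailSum G n - tailSum G (k + n) = ∑ i ∈ range k, G (i + n) := by
  have h := ((summable_nat_add_iff n).2 hG).sum_add_tsum_nat_add k
  simp only [add_assoc] at h
  rw [tailSum, tailSum, ← h]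
  ring

theorem antitone_tailSum (hG0 : ∀ k, 0 ≤ G k) (hG : Summable G) : Antitone (tailSum G) := by
  intro n n' hnn'
  obtain ⟨k, rfl⟩ := Nat.exists_eq_add_of_le' hnn'
  have := tailSum_sub_tailSum hG n k
  have : 0 ≤ ∑ i ∈ range k, G (i + n) := sum_nonneg fun i _ => hG0 _
  linarith

theorem tailSum_nonneg (hG0 : ∀ k, 0 ≤ G k) (n : ℕ) : 0 ≤ tailSum G n :=
  tsum_nonneg fun _ => hG0 _

theorem tendsto_tailSum (G : ℕ → ℝ) : Tendsto (tailSum G) atTop (𝓝 0) :=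
  tendsto_sum_nat_add G

end TailSum

section Weighted

variable {g : ℕ → ℝ}

theorem le_four_mul_tailSum_sub (hg0 : ∀ n, 1 ≤ n → 0 ≤ g n)
    (hgmono : ∀ n m, 1 ≤ n → n ≤ m → g n ≤ g m)
    (hsum : Summable fun k : ℕ => g k / (k * (k + 1))) {m : ℕ} (hm : 1 ≤ m) :
    g m ≤ 4 * m * (tailSum (fun k : ℕ => g k / (k * (k + 1))) m -
      tailSum (fun k : ℕ => g k / (k * (k + 1))) (2 * m)) := by
  have hm' : (0 : ℝ) < m := by exact_mod_cast hm
  rw [two_mul, tailSum_sub_tailSum hsum]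
  -- each of the `m` terms of `∑_{m ≤ k < 2m}` is at least `g m / (4 m²)`
  have hterm : ∀ i ∈ range m,
      g m / (4 * m ^ 2) ≤ g (i + m) / ((i + m : ℕ) * ((i + m : ℕ) + 1)) := by
    intro i hi
    have hi : (i : ℝ) + 1 ≤ m := by exact_mod_cast mem_range.1 hi
    refine div_le_div₀ (hg0 _ (by omega)) (hgmono _ _ hm (by omega)) (by positivity) ?_
    push_cast
    nlinarith
  have := card_nsmul_le_sum _ _ _ hterm
  rw [card_range, nsmul_eq_mul] at this
  calc g m = 4 * m * (m * (g m / (4 * m ^ 2))) := by field_simp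
    _ ≤ _ := by gcongr

end Weighted

section Subadditive

variable {g h φ : ℕ → ℝ}

theorem le_sixteen_mul_sub_of_balanced (hφ : Antitone φ)
    (hgφ : ∀ m, 1 ≤ m → g m ≤ 4 * m * (φ m - φ (2 * m))) {s t : ℕ} (ht : 1 ≤ t) (hts : t ≤ s)
    (hst : s ≤ 3 * t) : g (s + t) ≤ 16 * t * (φ (2 * t) - φ (2 * (s + t))) := by
  have h1 : φ (s + t) ≤ φ (2 * t) := hφ (by omega)
  have h2 : φ (2 * (s + t)) ≤ φ (s + t) := hφ (by omega)
  have hst' : ((s + t : ℕ) : ℝ) ≤ 4 * t := by push_cast; exact_mod_cast (by omega : s + t ≤ 4 * t)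
  calc g (s + t) ≤ 4 * (s + t : ℕ) * (φ (s + t) - φ (2 * (s + t))) := hgφ _ (by omega)
    _ ≤ 4 * (4 * t) * (φ (2 * t) - φ (2 * (s + t))) := by gcongr
    _ = 16 * t * (φ (2 * t) - φ (2 * (s + t))) := by ring

theorem SubadditiveUpTo.le_mul_add_mul (hsub : SubadditiveUpTo g h) (hφ : Antitone φ)
    (hgφ : ∀ m, 1 ≤ m → g m ≤ 4 * m * (φ m - φ (2 * m))) {n : ℕ} (hn : 1 ≤ n) (q : ℕ)
    (hq : 1 ≤ q) {r : ℕ} (hr : r ≤ q) :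
    h (q * n + r) ≤ ((q : ℝ) - r) * h n + r * h (n + 1)
      + 16 * ((q * n + r : ℕ) : ℝ) * (φ n - φ (2 * (q * n + r))) := by
  induction q using Nat.strong_induction_on generalizing r with
  | _ q ih =>
  rcases Nat.lt_or_ge q 2 with hq2 | hq2
  · obtain rfl : q = 1 := by omega
    have : 0 ≤ 16 * ((1 * n + r : ℕ) : ℝ) * (φ n - φ (2 * (1 * n + r))) :=
      mul_nonneg (by positivity) (sub_nonneg.2 (hφ (by omega)))
    interval_cases r <;>
      simp only [one_mul, add_zero, Nat.cast_zero, Nat.cast_one] at this ⊢ <;> linarith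
  obtain ⟨q₁, q₂, rfl, hq₂₁, hq₁₂⟩ : ∃ q₁ q₂, q = q₁ + q₂ ∧ q₂ ≤ q₁ ∧ q₁ ≤ q₂ + 1 :=
    ⟨(q + 1) / 2, q / 2, by omega, by omega, by omega⟩
  obtain ⟨r₁, r₂, rfl, hr₂₁, hr₁₂⟩ : ∃ r₁ r₂, r = r₁ + r₂ ∧ r₂ ≤ r₁ ∧ r₁ ≤ r₂ + 1 :=
    ⟨(r + 1) / 2, r / 2, by omega, by omega, by omega⟩
  have ih₁ := ih q₁ (by omega) (by omega) (r := r₁) (by omega)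
  have ih₂ := ih q₂ (by omega) (by omega) (r := r₂) (by omega)
  set s := q₁ * n + r₁
  set t := q₂ * n + r₂
  have hm : (q₁ + q₂) * n + (r₁ + r₂) = s + t := by ring
  have : q₂ * n ≤ q₁ * n := Nat.mul_le_mul_right n hq₂₁
  have : q₁ * n ≤ 2 * (q₂ * n) := by rw [← mul_assoc]; exact Nat.mul_le_mul_right n (by omega)
  have : 0 < q₂ * n := Nat.mul_pos (by omega) hn
  have hsplit := hsub s (by omega) t (by omega)
  have hg := le_sixteen_mul_sub_of_balanced hφ hgφ (s := s) (t := t) (by omega) (by omega) (by omega)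
  have hs : 0 ≤ (s : ℝ) * (φ (2 * s) - φ (2 * (s + t))) :=
    mul_nonneg s.cast_nonneg (sub_nonneg.2 (hφ (by omega)))
  rw [hm]
  push_cast
  linarith

theorem SubadditiveUpTo.eventually_div_le (hsub : SubadditiveUpTo g h)
    (hφ : Antitone φ) (hgφ : ∀ m, 1 ≤ m → g m ≤ 4 * m * (φ m - φ (2 * m)))
    (hφ0 : ∀ n, 0 ≤ φ n) {n : ℕ} (hn : 1 ≤ n) {ε : ℝ} (hε : 0 < ε) :
    ∀ᶠ m : ℕ in atTop, h m / m ≤ h n / n + 16 * φ n + ε := by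
  set D := |n * h (n + 1) - (n + 1) * h n|
  have hD : ∀ᶠ m : ℕ in atTop, D / m < ε :=
    (tendsto_const_div_atTop_nhds_zero_nat D).eventually (gt_mem_nhds hε)
  filter_upwards [hD, eventually_ge_atTop (n * n)] with m hDm hm
  obtain ⟨q, r, rfl, hr, hnq⟩ : ∃ q r, m = q * n + r ∧ r < n ∧ n ≤ q :=
    ⟨m / n, m % n, (Nat.div_add_mod' m n).symm, Nat.mod_lt m hn, (Nat.le_div_iff_mul_le hn).2 hm⟩
  have hbound := hsub.le_mul_add_mul hφ hgφ hn q (by omega) (r := r) (by omega)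
  set m := q * n + r
  have hn' : (0 : ℝ) < n := by exact_mod_cast hn
  have hm' : (0 : ℝ) < m := by exact_mod_cast Nat.add_pos_left (Nat.mul_pos (by omega) hn) r
  have hrn : (r : ℝ) / n ≤ 1 := div_le_one_of_le₀ (by exact_mod_cast hr.le) hn'.le
  have hrem : ((q : ℝ) - r) * h n + r * h (n + 1) ≤ m / n * h n + D := by
    have hm_cast : (m : ℝ) = q * n + r := by push_cast [m]; ring
    have hcorr : r / n * (n * h (n + 1) - (n + 1) * h n) ≤ D :=
      calc r / n * (n * h (n + 1) - (n + 1) * h n) ≤ r / n * D :=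
            mul_le_mul_of_nonneg_left (le_abs_self _) (by positivity)
        _ ≤ D := mul_le_of_le_one_left (abs_nonneg _) hrn
    calc ((q : ℝ) - r) * h n + r * h (n + 1)
        = m / n * h n + r / n * (n * h (n + 1) - (n + 1) * h n) := by
          rw [hm_cast]; field_simp; ring
      _ ≤ m / n * h n + D := by linarith
  have : 0 ≤ (m : ℝ) * φ (2 * m) := mul_nonneg hm'.le (hφ0 _)
  calc h m / m ≤ (m / n * h n + D + 16 * m * φ n) / m := by
        gcongr; linarith
    _ = h n / n + 16 * φ n + D / m := by field_simp; ring
    _ ≤ h n / n + 16 * φ n + ε := by linarith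

end Subadditive

theorem cauchySeq_of_eventually_abs_sub_le {u δ : ℕ → ℝ} (hδ : Tendsto δ atTop (𝓝 0))
    (h : ∀ᶠ n in atTop, ∀ ε > 0, ∀ᶠ m in atTop, |u m - u n| ≤ δ n + ε) : CauchySeq u := by
  rw [Metric.cauchySeq_iff]
  intro ε hε
  obtain ⟨n, hn, hδn⟩ := (h.and (hδ.eventually (gt_mem_nhds (by positivity : 0 < ε / 4)))).exists
  obtain ⟨N, hN⟩ := eventually_atTop.1 (hn (ε / 4) (by positivity))
  refine ⟨N, fun p hp k hk => ?_⟩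
  have hpn := hN p hp
  have hkn := hN k hk
  rw [← Real.dist_eq] at hpn hkn
  linarith [dist_triangle_right (u p) (u k) (u n)]

theorem SubadditiveUpTo.cauchySeq_div {g a : ℕ → ℝ} (ha : SubadditiveUpTo g a)
    (ha' : SubadditiveUpTo g (-a)) (hg0 : ∀ n, 1 ≤ n → 0 ≤ g n)
    (hgmono : ∀ n m, 1 ≤ n → n ≤ m → g n ≤ g m)
    (hsum : Summable fun k : ℕ => g k / (k * (k + 1))) : CauchySeq fun n => a n / n := by
  set G := fun k : ℕ => g k / (k * (k + 1))
  have hG0 : ∀ k, 0 ≤ G k := by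
    intro k
    rcases Nat.eq_zero_or_pos k with rfl | hk
    · simp [G] -- `g 0 / 0 = 0`
    · exact div_nonneg (hg0 k hk) (by positivity)
  have hφ := antitone_tailSum hG0 hsum
  have hgφ := fun m (hm : 1 ≤ m) => le_four_mul_tailSum_sub hg0 hgmono hsum hm
  have hδ : Tendsto (fun n => 16 * tailSum G n) atTop (𝓝 0) := by
    simpa using (tendsto_tailSum G).const_mul 16
  refine cauchySeq_of_eventually_abs_sub_le hδ ?_
  filter_upwards [eventually_ge_atTop 1] with n hn ε hε
  filter_upwards [ha.eventually_div_le hφ hgφ (tailSum_nonneg hG0) hn hε,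
    ha'.eventually_div_le hφ hgφ (tailSum_nonneg hG0) hn hε] with m hup hlow
  simp only [Pi.neg_apply, neg_div] at hlow
  exact abs_sub_le_iff.2 ⟨by linarith, by linarith⟩

/-- **Hammersley's lemma** (generalized subadditivity): if sequences `(a_n), (b_n), (c_n)`
satisfy `a_n + a_m − c_{n+m} ≤ a_{n+m} ≤ a_n + a_m + b_{n+m}` for all `n, m ≥ 1`, with
`(b_n)` and `(c_n)` nonnegative and non-decreasing and
`∑_{n ≥ 1} (b_n + c_n)/(n(n+1)) < ∞`, then `lim_{n → ∞} a_n / n` exists. -/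
theorem hammersley (a b c : ℕ → ℝ)
    (hsand : ∀ n, 1 ≤ n → ∀ m, 1 ≤ m →
      a n + a m - c (n + m) ≤ a (n + m) ∧ a (n + m) ≤ a n + a m + b (n + m))
    (hb0 : ∀ n, 1 ≤ n → 0 ≤ b n) (hc0 : ∀ n, 1 ≤ n → 0 ≤ c n)
    (hbmono : ∀ n m, 1 ≤ n → n ≤ m → b n ≤ b m)
    (hcmono : ∀ n m, 1 ≤ n → n ≤ m → c n ≤ c m)
    (hsum : Summable (fun n : ℕ => (b (n + 1) + c (n + 1)) / ((n + 1) * (n + 2)))) :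
    ∃ L : ℝ, Tendsto (fun n : ℕ => a n / n) atTop (𝓝 L) := by
  have hup : SubadditiveUpTo (b + c) a := fun n hn m hm => by
    have := (hsand n hn m hm).2
    have := hc0 (n + m) (by omega)
    simp only [Pi.add_apply]
    linarith
  have hlow : SubadditiveUpTo (b + c) (-a) := fun n hn m hm => by
    have := (hsand n hn m hm).1
    have := hb0 (n + m) (by omega)
    simp only [Pi.add_apply, Pi.neg_apply]
    linarith
  have hsum' : Summable fun k : ℕ => (b + c) k / (k * (k + 1)) := by
    rw [← summable_nat_add_iff 1]
    refine hsum.congr fun k => ?_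
    simp only [Pi.add_apply]
    push_cast
    ring
  exact cauchySeq_tendsto_of_complete <| hup.cauchySeq_div hlow
    (fun n hn => add_nonneg (hb0 n hn) (hc0 n hn))
    (fun n m hn hnm => add_le_add (hbmono n m hn hnm) (hcmono n m hn hnm)) hsum'
end
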